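/- For α ∈ (0,1) and any nonzero polynomial R of degree at most p + q, there exist nonzero polynomials P of degree at most p and Q of degree at most q, not both zero, such that z(P'Q - PQ') + αPQ = c·R for some nonzero constant c. -/

import Mathlib

/-!
The coefficients of `W_α(P, Q)` are bilinear in the coefficient vectors of `P` and `Q`, and
`W_α(P, Q) ∈ ℂ ∙ R` is a system of `p + q` such equations. Hence it suffices that `p + q` bilinear
forms on `ℂ^{p+1} × ℂ^{q+1}` have a common zero `(x, y)` with `x ≠ 0` and `y ≠ 0`, i.e. that
`p + q` hyperplanes meet the Segre variety `ℙ^p × ℙ^q`. If they did not, the Nullstellensatz would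
put a power `(x_i y_j)^(N+1)` of every product of coordinates into the ideal of the forms, with
cofactors of bidegree `(N, N)`. Then every monomial of bidegree `(d, d)` is a combination of
products `∏ g_k^{c_k}` with `c_k ≤ d` times monomials of bounded exponents, so the monomials of
bidegree `(d, d)` for `d ≤ L` span a space of dimension `O(L^{p+q})`; but they contain
`L^{p+q+1}` linearly independent ones.

Finally `W_α(P, Q) ≠ 0` for `P, Q ≠ 0`: its coefficient of degree `deg P + deg Q` is
`(deg P - deg Q + α) · lc P · lc Q`, and `α` is not an integer.
-/

theorem Nat.exists_mul_pow_lt_pow {n s : ℕ} (h : n < s) (C : ℕ) :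
    ∃ L, C * (s * L + 1) ^ n < L ^ s := by
  refine ⟨C * (s + 1) ^ n + 1, ?_⟩
  set L := C * (s + 1) ^ n + 1
  have hL : 1 ≤ L := Nat.le_add_left 1 _
  calc C * (s * L + 1) ^ n ≤ C * ((s + 1) * L) ^ n := by gcongr; nlinarith
    _ = C * (s + 1) ^ n * L ^ n := by rw [mul_pow]; ring
    _ < L * L ^ n := by gcongr; exact Nat.lt_add_one _
    _ = L ^ (n + 1) := by ring
    _ ≤ L ^ s := Nat.pow_le_pow_right hL h

namespace MvPolynomial

section WeightedHomogeneous

variable {σ R M ι : Type*} [CommSemiring R] [AddCancelCommMonoid M] {w : σ → M}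

theorem weightedHomogeneousComponent_add_mul_of_isWeightedHomogeneous
    {ψ : MvPolynomial σ R} {n : M} (hψ : IsWeightedHomogeneous w ψ n) (φ : MvPolynomial σ R)
    (m : M) :
    weightedHomogeneousComponent w (m + n) (φ * ψ) = weightedHomogeneousComponent w m φ * ψ := by
  classical
  let _ := weightedGradedAlgebra R w
  have h := DirectSum.coe_decompose_mul_add_of_right_mem (weightedHomogeneousSubmodule R w)
    (i := m) (a := φ) hψ
  rw [← DirectSum.Decomposition.decompose'_eq] at h
  exact (weightedDecomposition.decompose'_apply R w _ _).symm.trans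
    (h.trans (congrArg (· * ψ) (weightedDecomposition.decompose'_apply R w _ _)))

theorem exists_isWeightedHomogeneous_eq_sum_mul [Fintype ι] {g : ι → MvPolynomial σ R} {e : M}
    (hg : ∀ k, IsWeightedHomogeneous w (g k) e) {f : MvPolynomial σ R} {n : M}
    (hf : IsWeightedHomogeneous w f (n + e)) (hmem : f ∈ Ideal.span (Set.range g)) :
    ∃ h : ι → MvPolynomial σ R, (∀ k, IsWeightedHomogeneous w (h k) n) ∧ f = ∑ k, h k * g k := by
  obtain ⟨c, rfl⟩ := Ideal.mem_span_range_iff_exists_fun.mp hmem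
  refine ⟨fun k => weightedHomogeneousComponent w n (c k),
    fun k => weightedHomogeneousComponent_isWeightedHomogeneous _ _, ?_⟩
  conv_lhs => rw [← hf.weightedHomogeneousComponent_same, map_sum]
  simp only [weightedHomogeneousComponent_add_mul_of_isWeightedHomogeneous (hg _)]

end WeightedHomogeneous

theorem exists_pow_mem_of_forall_eval_eq_zero {K σ : Type*} [Field K] [IsAlgClosed K] [Finite σ]
    {I : Ideal (MvPolynomial σ K)} {s : Set (MvPolynomial σ K)}
    (h : ∀ x : σ → K, (∀ p ∈ I, eval x p = 0) → ∀ f ∈ s, eval x f = 0) :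
    ∃ N, ∀ f ∈ s, f ^ N ∈ I := by
  have hle : Ideal.span s ≤ I.radical := by
    rw [Ideal.span_le, ← vanishingIdeal_zeroLocus_eq_radical (K := K)]
    intro f hf
    rw [SetLike.mem_coe, mem_vanishingIdeal_iff]
    intro x hx
    simpa using h x (fun p hp => by simpa using (mem_zeroLocus_iff.mp hx) p hp) f hf
  obtain ⟨N, hN⟩ := Ideal.exists_pow_le_of_le_radical_of_fg hle (IsNoetherian.noetherian _)
  exact ⟨N, fun f hf => hN (Ideal.pow_mem_pow (Ideal.subset_span hf) N)⟩

section Bidegree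

variable {K α β : Type*}

def bidegreeWeight : α ⊕ β → ℕ × ℕ := Sum.elim (fun _ => (1, 0)) fun _ => (0, 1)

theorem weight_bidegreeWeight [Fintype α] [Fintype β] (μ : α ⊕ β →₀ ℕ) :
    Finsupp.weight bidegreeWeight μ = (∑ a, μ (.inl a), ∑ b, μ (.inr b)) := by
  rw [Finsupp.weight_eq_sum, Fintype.sum_sum_type]
  ext <;> simp [bidegreeWeight, Prod.fst_sum, Prod.snd_sum]

theorem isWeightedHomogeneous_X_inl_mul_X_inr [CommSemiring K] (a : α) (b : β) :
    IsWeightedHomogeneous bidegreeWeight (X (.inl a) * X (.inr b) : MvPolynomial (α ⊕ β) K)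
      (1, 1) :=
  (isWeightedHomogeneous_X K bidegreeWeight (.inl a : α ⊕ β)).mul
    (isWeightedHomogeneous_X K bidegreeWeight (.inr b : α ⊕ β))

theorem X_inl_mul_X_inr_pow [CommSemiring K] (a : α) (b : β) (n : ℕ) :
    (X (.inl a) * X (.inr b) : MvPolynomial (α ⊕ β) K) ^ n
      = monomial (Finsupp.single (.inl a) n + Finsupp.single (.inr b) n) 1 := by
  rw [mul_pow, X_pow_eq_monomial, X_pow_eq_monomial, monomial_mul, one_mul]

theorem exists_eq_single_inl_add_single_inr_add [Fintype α] [Fintype β] {μ : α ⊕ β →₀ ℕ}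
    {n : ℕ} (hα : Fintype.card α * n < ∑ a, μ (.inl a))
    (hβ : Fintype.card β * n < ∑ b, μ (.inr b)) :
    ∃ a b μ', μ = Finsupp.single (.inl a) (n + 1) + Finsupp.single (.inr b) (n + 1) + μ' := by
  classical
  obtain ⟨a, -, ha⟩ := Finset.exists_lt_of_sum_lt (s := Finset.univ) (f := fun _ => n)
    (g := fun a => μ (.inl a)) (by rwa [Finset.sum_const, Finset.card_univ, smul_eq_mul])
  obtain ⟨b, -, hb⟩ := Finset.exists_lt_of_sum_lt (s := Finset.univ) (f := fun _ => n)
    (g := fun b => μ (.inr b)) (by rwa [Finset.sum_const, Finset.card_univ, smul_eq_mul])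
  refine ⟨a, b, exists_add_of_le fun v => ?_⟩
  rcases v with a' | b' <;>
    simp only [Finsupp.add_apply, Finsupp.single_apply, Sum.inl.injEq, Sum.inr.injEq,
      reduceCtorEq, if_false, add_zero, zero_add] <;> split_ifs <;> subst_vars <;> omega

end Bidegree

section Counting

variable {α β : Type*} [Fintype α] [Fintype β] [DecidableEq α] [DecidableEq β]

/-- The exponent of `∏ a, (X a * X b₀) ^ u a * ∏ b ≠ b₀, (X a₀ * X b) ^ v b`. -/
noncomputable def balancedExponent (a₀ : α) (b₀ : β) (u : α → ℕ) (v : {b // b ≠ b₀} → ℕ) :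
    α ⊕ β →₀ ℕ :=
  Finsupp.equivFunOnFinite.symm <| Sum.elim (fun a => u a + if a = a₀ then ∑ b, v b else 0)
    fun b => if h : b = b₀ then ∑ a, u a else v ⟨b, h⟩

theorem weight_balancedExponent (a₀ : α) (b₀ : β) (u : α → ℕ) (v : {b // b ≠ b₀} → ℕ) :
    Finsupp.weight bidegreeWeight (balancedExponent a₀ b₀ u v)
      = (∑ a, u a + ∑ b, v b, ∑ a, u a + ∑ b, v b) := by
  rw [weight_bidegreeWeight, Fintype.sum_eq_add_sum_subtype_ne _ b₀]
  simp only [balancedExponent, ne_eq, Finsupp.equivFunOnFinite_symm_apply_apply, Sum.elim_inl,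
    Finset.sum_add_distrib, Finset.sum_ite_eq', Finset.mem_univ, ↓reduceIte, Sum.elim_inr,
    ↓reduceDIte, Subtype.coe_eta, dite_eq_ite, Prod.mk.injEq, Nat.add_left_cancel_iff, true_and]
  exact Finset.sum_congr rfl fun b _ => if_neg b.2

theorem balancedExponent_injective (a₀ : α) (b₀ : β) :
    Function.Injective fun uv : (α → ℕ) × ({b // b ≠ b₀} → ℕ) =>
      balancedExponent a₀ b₀ uv.1 uv.2 := by
  rintro ⟨u, v⟩ ⟨u', v'⟩ h
  have hv : v = v' := _root_.funext fun b => by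
    simpa [balancedExponent, b.2] using DFunLike.congr_fun h (.inr b)
  subst hv
  have hu : u = u' := _root_.funext fun a => by
    simpa [balancedExponent] using DFunLike.congr_fun h (.inl a)
  rw [hu]

theorem linearIndependent_monomial_balancedExponent (K : Type*) [CommSemiring K] (a₀ : α)
    (b₀ : β) (L : ℕ) :
    LinearIndependent K fun uv : (α → Fin L) × ({b // b ≠ b₀} → Fin L) =>
      monomial (balancedExponent a₀ b₀ (fun a => uv.1 a) fun b => uv.2 b) (1 : K) := by
  refine (basisMonomials (α ⊕ β) K).linearIndependent.comp _ fun uv uv' h => ?_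
  have := balancedExponent_injective a₀ b₀ (a₁ := (fun a => uv.1 a, fun b => uv.2 b))
    (a₂ := (fun a => uv'.1 a, fun b => uv'.2 b)) h
  simp only [Prod.mk.injEq] at this
  ext1
  · exact _root_.funext fun a => Fin.ext (congrFun this.1 a)
  · exact _root_.funext fun b => Fin.ext (congrFun this.2 b)

end Counting

section Generation

variable {K α β ι : Type*} [Field K] [Fintype α] [Fintype β] [Fintype ι]
  (g : ι → MvPolynomial (α ⊕ β) K)

open Classical in
noncomputable def prodPowMulMonomials (D d : ℕ) : Finset (MvPolynomial (α ⊕ β) K) :=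
  (Fintype.piFinset (fun _ : ι => Finset.range (d + 1)) ×ˢ
      Fintype.piFinset (fun _ : α ⊕ β => Finset.range (D + 1))).image
    fun cν => (∏ k, g k ^ cν.1 k) * monomial (Finsupp.equivFunOnFinite.symm cν.2) 1

theorem mem_prodPowMulMonomials {D d : ℕ} {f : MvPolynomial (α ⊕ β) K} :
    f ∈ prodPowMulMonomials g D d ↔ ∃ c : ι → ℕ, (∀ k, c k ≤ d) ∧
      ∃ ν : α ⊕ β →₀ ℕ, (∀ v, ν v ≤ D) ∧ (∏ k, g k ^ c k) * monomial ν 1 = f := by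
  simp only [prodPowMulMonomials, Finset.mem_image, Finset.mem_product, Fintype.mem_piFinset,
    Finset.mem_range, Nat.lt_succ_iff, Prod.exists]
  constructor
  · rintro ⟨c, ν, ⟨hc, hν⟩, rfl⟩
    exact ⟨c, hc, _, hν, rfl⟩
  · rintro ⟨c, hc, ν, hν, rfl⟩
    exact ⟨c, ν, ⟨hc, hν⟩, by rw [Finsupp.equivFunOnFinite_symm_coe]⟩

theorem card_prodPowMulMonomials_le (D d : ℕ) :
    (prodPowMulMonomials g D d).card
      ≤ (d + 1) ^ Fintype.card ι * (D + 1) ^ (Fintype.card α + Fintype.card β) := by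
  classical
  refine Finset.card_image_le.trans ?_
  simp [Fintype.card_piFinset, Fintype.card_sum]

theorem prodPowMulMonomials_mono {D d d' : ℕ} (h : d ≤ d') :
    prodPowMulMonomials g D d ⊆ prodPowMulMonomials g D d' := by
  intro f hf
  obtain ⟨c, hc, hν⟩ := (mem_prodPowMulMonomials g).mp hf
  exact (mem_prodPowMulMonomials g).mpr ⟨c, fun k => (hc k).trans h, hν⟩

theorem monomial_mem_prodPowMulMonomials {D : ℕ} (d : ℕ) {μ : α ⊕ β →₀ ℕ} (hμ : ∀ v, μ v ≤ D) :
    monomial μ 1 ∈ prodPowMulMonomials g D d :=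
  (mem_prodPowMulMonomials g).mpr ⟨0, fun _ => Nat.zero_le d, μ, hμ, by simp⟩

theorem mul_mem_span_prodPowMulMonomials {D d : ℕ} (k : ι) {f : MvPolynomial (α ⊕ β) K}
    (hf : f ∈ Submodule.span K (prodPowMulMonomials g D d : Set (MvPolynomial (α ⊕ β) K))) :
    g k * f ∈
      Submodule.span K (prodPowMulMonomials g D (d + 1) : Set (MvPolynomial (α ⊕ β) K)) := by
  classical
  refine (Submodule.map_span_le (LinearMap.mulLeft K (g k)) _ _).mpr ?_ ⟨f, hf, rfl⟩
  intro f hf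
  obtain ⟨c, hc, ν, hν, rfl⟩ := (mem_prodPowMulMonomials g).mp hf
  refine Submodule.subset_span ((mem_prodPowMulMonomials g).mpr
    ⟨c + Pi.single k 1, fun k' => ?_, ν, hν, ?_⟩)
  · have := hc k'
    rw [Pi.add_apply, Pi.single_apply]
    split_ifs <;> omega
  · have hsingle : ∏ k', g k' ^ (Pi.single k 1 : ι → ℕ) k' = g k := by
      rw [Fintype.prod_eq_single k fun k' hk' => by rw [Pi.single_eq_of_ne hk', pow_zero],
        Pi.single_eq_same, pow_one]
    simp only [Pi.add_apply, pow_add, Finset.prod_mul_distrib, hsingle, LinearMap.mulLeft_apply]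
    ring

end Generation

variable {K α β ι : Type*} [Field K] [Fintype α] [Fintype β] [Fintype ι]

theorem weightedHomogeneousSubmodule_le_span_prodPowMulMonomials {g : ι → MvPolynomial (α ⊕ β) K}
    {N : ℕ} (hcof : ∀ a b, ∃ h : ι → MvPolynomial (α ⊕ β) K,
      (∀ k, IsWeightedHomogeneous bidegreeWeight (h k) (N, N)) ∧
        (X (.inl a) * X (.inr b)) ^ (N + 1) = ∑ k, h k * g k) (d : ℕ) :
    weightedHomogeneousSubmodule K bidegreeWeight (d, d) ≤
      Submodule.span K (prodPowMulMonomials g ((Fintype.card α + Fintype.card β) * N) d :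
        Set (MvPolynomial (α ⊕ β) K)) := by
  classical
  induction d using Nat.strong_induction_on with
  | _ d ih =>
  rw [weightedHomogeneousSubmodule_eq_finsupp_supported,
    AddMonoidAlgebra.supported_eq_span_single, Submodule.span_le]
  rintro _ ⟨μ, hμ, rfl⟩
  change Finsupp.weight bidegreeWeight μ = (d, d) at hμ
  change monomial μ 1 ∈ _
  have hμa : ∑ a, μ (.inl a) = d := congrArg Prod.fst ((weight_bidegreeWeight μ).symm.trans hμ)
  have hμb : ∑ b, μ (.inr b) = d := congrArg Prod.snd ((weight_bidegreeWeight μ).symm.trans hμ)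
  by_cases hd : d ≤ (Fintype.card α + Fintype.card β) * N
  · refine Submodule.subset_span (monomial_mem_prodPowMulMonomials g d fun v => ?_)
    rcases v with a | b
    · exact (Finset.single_le_sum (fun _ _ => Nat.zero_le _) (Finset.mem_univ a)).trans
        (hμa.trans_le (by nlinarith))
    · exact (Finset.single_le_sum (fun _ _ => Nat.zero_le _) (Finset.mem_univ b)).trans
        (hμb.trans_le (by nlinarith))
  -- A monomial of large bidegree is divisible by some `(X a * X b) ^ (N + 1)`, which `hcof`
  -- rewrites through the `g k` with cofactors of bidegree `(d - 1, d - 1)`.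
  obtain ⟨a, b, μ', rfl⟩ := exists_eq_single_inl_add_single_inr_add (n := N) (μ := μ)
    (by nlinarith) (by nlinarith)
  rw [map_add, map_add, Finsupp.weight_single, Finsupp.weight_single] at hμ
  obtain ⟨h, hh, hrep⟩ := hcof a b
  rw [← one_mul (1 : K), ← monomial_mul, ← X_inl_mul_X_inr_pow, hrep, Finset.sum_mul]
  refine Submodule.sum_mem _ fun k _ => ?_
  obtain ⟨e, rfl⟩ : ∃ e, d = e + 1 := ⟨d - 1, by omega⟩
  rw [mul_comm (h k), mul_assoc]
  refine mul_mem_span_prodPowMulMonomials g k (ih e (by omega) ?_)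
  rw [mem_weightedHomogeneousSubmodule]
  convert (hh k).mul (isWeightedHomogeneous_monomial _ μ' 1 rfl) using 1
  simp only [bidegreeWeight, Sum.elim_inl, Sum.elim_inr, Prod.ext_iff, Prod.fst_add,
    Prod.snd_add, Prod.smul_fst, Prod.smul_snd, smul_eq_mul] at hμ ⊢
  omega

theorem pow_le_card_prodPowMulMonomials [Nonempty α] [Nonempty β]
    {g : ι → MvPolynomial (α ⊕ β) K} {N : ℕ}
    (hcof : ∀ a b, ∃ h : ι → MvPolynomial (α ⊕ β) K,
      (∀ k, IsWeightedHomogeneous bidegreeWeight (h k) (N, N)) ∧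
        (X (.inl a) * X (.inr b)) ^ (N + 1) = ∑ k, h k * g k) (L : ℕ) :
    L ^ (Fintype.card α + Fintype.card β - 1) ≤
      (prodPowMulMonomials g ((Fintype.card α + Fintype.card β) * N)
        ((Fintype.card α + Fintype.card β - 1) * L)).card := by
  classical
  obtain ⟨a₀⟩ := ‹Nonempty α›
  obtain ⟨b₀⟩ := ‹Nonempty β›
  have hβ : Fintype.card {b // b ≠ b₀} = Fintype.card β - 1 := by simp [Fintype.card_subtype_compl]
  have hβ_pos := Fintype.card_pos (α := β)
  let F : (α → Fin L) × ({b // b ≠ b₀} → Fin L) → MvPolynomial (α ⊕ β) K :=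
    fun uv => monomial (balancedExponent a₀ b₀ (fun a => uv.1 a) fun b => uv.2 b) 1
  have hspan : Set.range F ⊆ Submodule.span K (prodPowMulMonomials g
      ((Fintype.card α + Fintype.card β) * N) ((Fintype.card α + Fintype.card β - 1) * L) :
        Set (MvPolynomial (α ⊕ β) K)) := by
    rintro _ ⟨⟨u, v⟩, rfl⟩
    have hlevel :
        ∑ a, (u a : ℕ) + ∑ b, (v b : ℕ) ≤ (Fintype.card α + Fintype.card β - 1) * L := by
      have hu := Finset.sum_le_card_nsmul Finset.univ (fun a => (u a : ℕ)) L
        fun a _ => (u a).isLt.le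
      have hv := Finset.sum_le_card_nsmul Finset.univ (fun b => (v b : ℕ)) L
        fun b _ => (v b).isLt.le
      rw [Finset.card_univ, smul_eq_mul] at hu hv
      rw [hβ] at hv
      rw [show Fintype.card α + Fintype.card β - 1 = Fintype.card α + (Fintype.card β - 1) by omega,
        add_mul]
      exact add_le_add hu hv
    refine Submodule.span_mono (Finset.coe_subset.mpr (prodPowMulMonomials_mono g hlevel))
      (weightedHomogeneousSubmodule_le_span_prodPowMulMonomials hcof _ ?_)
    exact isWeightedHomogeneous_monomial _ _ _ (weight_balancedExponent a₀ b₀ _ _)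
  have hcard : Fintype.card ((α → Fin L) × ({b // b ≠ b₀} → Fin L))
      = L ^ (Fintype.card α + Fintype.card β - 1) := by
    rw [Fintype.card_prod, Fintype.card_fun, Fintype.card_fun, Fintype.card_fin, hβ, ← pow_add]
    congr 1
    omega
  rw [← hcard]
  simpa using linearIndependent_le_span_aux' F
    (linearIndependent_monomial_balancedExponent K a₀ b₀ L) _ hspan

theorem exists_eval_eq_zero_of_isWeightedHomogeneous [IsAlgClosed K] [Nonempty α] [Nonempty β]
    (g : ι → MvPolynomial (α ⊕ β) K)
    (hg : ∀ k, IsWeightedHomogeneous bidegreeWeight (g k) (1, 1))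
    (hcard : Fintype.card ι + 2 ≤ Fintype.card α + Fintype.card β) :
    ∃ x : α ⊕ β → K, (∀ k, eval x (g k) = 0) ∧ x ∘ Sum.inl ≠ 0 ∧ x ∘ Sum.inr ≠ 0 := by
  by_contra! hno
  obtain ⟨N, hN⟩ := exists_pow_mem_of_forall_eval_eq_zero (I := Ideal.span (Set.range g))
    (s := Set.range fun ab : α × β => X (.inl ab.1) * X (.inr ab.2)) fun x hx => by
      rintro _ ⟨⟨a, b⟩, rfl⟩
      rw [map_mul, eval_X, eval_X, mul_eq_zero]
      by_cases ha : x ∘ Sum.inl = 0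
      · exact Or.inl (congrFun ha a)
      · exact Or.inr (congrFun (hno x (fun k => hx _ (Ideal.subset_span ⟨k, rfl⟩)) ha) b)
  have hpow (a : α) (b : β) : IsWeightedHomogeneous bidegreeWeight
      ((X (.inl a) * X (.inr b) : MvPolynomial (α ⊕ β) K) ^ (N + 1)) ((N, N) + (1, 1)) := by
    convert (isWeightedHomogeneous_X_inl_mul_X_inr (K := K) a b).pow (N + 1) using 1
    ext <;> simp
  have hcof (a : α) (b : β) := exists_isWeightedHomogeneous_eq_sum_mul hg (hpow a b)
    (pow_succ (X (.inl a) * X (.inr b) : MvPolynomial (α ⊕ β) K) N ▸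
      Ideal.mul_mem_right _ _ (hN _ ⟨(a, b), rfl⟩))
  obtain ⟨L, hL⟩ := Nat.exists_mul_pow_lt_pow (s := Fintype.card α + Fintype.card β - 1)
    (n := Fintype.card ι) (by omega)
    (((Fintype.card α + Fintype.card β) * N + 1) ^ (Fintype.card α + Fintype.card β))
  have hle := (pow_le_card_prodPowMulMonomials hcof L).trans (card_prodPowMulMonomials_le g _ _)
  rw [mul_comm] at hle
  exact hL.not_ge hle

end MvPolynomial

open Module MvPolynomial in
theorem LinearMap.exists_ne_zero_ne_zero_apply_eq_zero {K V W U : Type*} [Field K]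
    [IsAlgClosed K] [AddCommGroup V] [Module K V] [FiniteDimensional K V]
    [AddCommGroup W] [Module K W] [FiniteDimensional K W]
    [AddCommGroup U] [Module K U] [FiniteDimensional K U]
    (B : V →ₗ[K] W →ₗ[K] U) (hV : 0 < finrank K V) (hW : 0 < finrank K W)
    (h : finrank K U + 2 ≤ finrank K V + finrank K W) :
    ∃ v w, v ≠ 0 ∧ w ≠ 0 ∧ B v w = 0 := by
  let bV := Module.finBasis K V
  let bW := Module.finBasis K W
  let bU := Module.finBasis K U
  have : Nonempty (Fin (finrank K V)) := Fin.pos_iff_nonempty.mp hV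
  have : Nonempty (Fin (finrank K W)) := Fin.pos_iff_nonempty.mp hW
  let g : Fin (finrank K U) → MvPolynomial (Fin (finrank K V) ⊕ Fin (finrank K W)) K := fun u =>
    ∑ i, ∑ j, C (bU.repr (B (bV i) (bW j)) u) * (X (.inl i) * X (.inr j))
  have hg (u : Fin (finrank K U)) : IsWeightedHomogeneous bidegreeWeight (g u) (1, 1) :=
    .sum _ _ _ fun i _ => .sum _ _ _ fun j _ => (isWeightedHomogeneous_X_inl_mul_X_inr i j).C_mul _
  obtain ⟨x, hx, hxV, hxW⟩ := exists_eval_eq_zero_of_isWeightedHomogeneous g hg (by simpa using h)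
  refine ⟨bV.equivFun.symm (x ∘ Sum.inl), bW.equivFun.symm (x ∘ Sum.inr),
    (LinearEquiv.map_ne_zero_iff _).mpr hxV, (LinearEquiv.map_ne_zero_iff _).mpr hxW,
    bU.ext_elem fun u => ?_⟩
  simp only [Basis.equivFun_symm_apply, map_sum, map_smul, LinearMap.sum_apply,
    LinearMap.smul_apply, Finsupp.coe_finsetSum, Finsupp.coe_smul, Finset.sum_apply,
    Pi.smul_apply, smul_eq_mul, Function.comp_apply, map_zero, Finsupp.coe_zero, Pi.zero_apply,
    Finset.mul_sum]
  rw [Finset.sum_comm, ← hx u]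
  simp only [g, map_sum, map_mul, eval_C, eval_X]
  exact Finset.sum_congr rfl fun i _ => Finset.sum_congr rfl fun j _ => by ring

namespace Polynomial

section CommRing

variable {R : Type*} [CommRing R]

noncomputable def wAlpha (a : R) : R[X] →ₗ[R] R[X] →ₗ[R] R[X] :=
  LinearMap.mk₂ R (fun P Q => X * (derivative P * Q - P * derivative Q) + C a * (P * Q))
    (fun P₁ P₂ Q => by simp only [map_add]; ring)
    (fun c P Q => by simp only [smul_eq_C_mul, derivative_C_mul]; ring)
    (fun P Q₁ Q₂ => by simp only [map_add]; ring)
    (fun c P Q => by simp only [smul_eq_C_mul, derivative_C_mul]; ring)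

theorem wAlpha_eq (a : R) (P Q : R[X]) :
    wAlpha a P Q = X * derivative P * Q - P * (X * derivative Q) + C a * (P * Q) := by
  change X * (derivative P * Q - P * derivative Q) + C a * (P * Q) = _
  ring

theorem coeff_X_mul_derivative (P : R[X]) (n : ℕ) :
    (X * derivative P).coeff n = n * P.coeff n := by
  cases n with
  | zero => simp
  | succ n => rw [coeff_X_mul, coeff_derivative]; push_cast; ring

theorem natDegree_X_mul_derivative_le (P : R[X]) :
    (X * derivative P).natDegree ≤ P.natDegree :=
  natDegree_le_iff_coeff_eq_zero.mpr fun n hn => by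
    rw [coeff_X_mul_derivative, coeff_eq_zero_of_natDegree_lt hn, mul_zero]

theorem natDegree_wAlpha_le (a : R) (P Q : R[X]) :
    (wAlpha a P Q).natDegree ≤ P.natDegree + Q.natDegree := by
  rw [wAlpha_eq]
  refine natDegree_add_le_of_degree_le
    ((natDegree_sub_le_of_le ?_ ?_).trans (max_self _).le) ?_
  · exact natDegree_mul_le_of_le (natDegree_X_mul_derivative_le P) le_rfl
  · exact natDegree_mul_le_of_le le_rfl (natDegree_X_mul_derivative_le Q)
  · exact (natDegree_C_mul_le _ _).trans natDegree_mul_le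

theorem coeff_wAlpha_natDegree_add (a : R) (P Q : R[X]) :
    (wAlpha a P Q).coeff (P.natDegree + Q.natDegree)
      = (P.natDegree - Q.natDegree + a) * P.leadingCoeff * Q.leadingCoeff := by
  rw [wAlpha_eq, coeff_add, coeff_sub, coeff_C_mul,
    coeff_mul_add_eq_of_natDegree_le (natDegree_X_mul_derivative_le P) le_rfl,
    coeff_mul_add_eq_of_natDegree_le le_rfl (natDegree_X_mul_derivative_le Q),
    coeff_mul_add_eq_of_natDegree_le le_rfl le_rfl,
    coeff_X_mul_derivative, coeff_X_mul_derivative]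
  simp only [leadingCoeff]
  ring

theorem wAlpha_ne_zero [IsDomain R] {a : R} (ha : ∀ n : ℤ, a ≠ n) {P Q : R[X]}
    (hP : P ≠ 0) (hQ : Q ≠ 0) : wAlpha a P Q ≠ 0 := by
  intro h
  have hcoeff := coeff_wAlpha_natDegree_add a P Q
  rw [h, coeff_zero] at hcoeff
  have hfactor : (P.natDegree - Q.natDegree + a : R) ≠ 0 := fun h0 =>
    ha (Q.natDegree - P.natDegree) (by push_cast; linear_combination h0)
  exact mul_ne_zero (mul_ne_zero hfactor (leadingCoeff_ne_zero.mpr hP))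
    (leadingCoeff_ne_zero.mpr hQ) hcoeff.symm

theorem mem_degreeLT_succ_iff {n : ℕ} {f : R[X]} :
    f ∈ degreeLT R (n + 1) ↔ f.natDegree ≤ n := by
  rw [degreeLT_succ_eq_degreeLE, mem_degreeLE, natDegree_le_iff_degree_le]

theorem wAlpha_mem_degreeLT (a : R) {m n : ℕ} {P Q : R[X]}
    (hP : P ∈ degreeLT R (m + 1)) (hQ : Q ∈ degreeLT R (n + 1)) :
    wAlpha a P Q ∈ degreeLT R (m + n + 1) := by
  rw [mem_degreeLT_succ_iff] at *
  exact (natDegree_wAlpha_le a P Q).trans (add_le_add hP hQ)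

end CommRing

variable {K : Type*} [Field K]

theorem finrank_degreeLT (n : ℕ) : Module.finrank K (degreeLT K n) = n := by
  rw [(degreeLTEquiv K n).finrank_eq, Module.finrank_fin_fun]

theorem exists_wAlpha_eq_C_mul [IsAlgClosed K] (a : K) (p q : ℕ) {R : K[X]} (hR : R ≠ 0)
    (hdeg : R.natDegree ≤ p + q) :
    ∃ P Q : K[X], P ≠ 0 ∧ Q ≠ 0 ∧ P.natDegree ≤ p ∧ Q.natDegree ≤ q ∧
      ∃ c : K, wAlpha a P Q = C c * R := by
  let R' : degreeLT K (p + q + 1) := ⟨R, mem_degreeLT_succ_iff.mpr hdeg⟩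
  let W := LinearMap.codRestrict₂
    ((wAlpha a).compl₁₂ (degreeLT K (p + 1)).subtype (degreeLT K (q + 1)).subtype)
    (degreeLT K (p + q + 1)).subtype Subtype.val_injective fun P Q => by
      rw [Submodule.range_subtype]
      exact wAlpha_mem_degreeLT a P.2 Q.2
  have hquot : Module.finrank K (degreeLT K (p + q + 1) ⧸ K ∙ R') + 1 = p + q + 1 := by
    have := Submodule.finrank_quotient_add_finrank (K ∙ R')
    rwa [finrank_span_singleton (Subtype.coe_ne_coe.mp hR), finrank_degreeLT] at this
  obtain ⟨P, Q, hP, hQ, hPQ⟩ := (W.compr₂ (K ∙ R').mkQ).exists_ne_zero_ne_zero_apply_eq_zero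
    (by rw [finrank_degreeLT]; omega) (by rw [finrank_degreeLT]; omega)
    (by rw [finrank_degreeLT, finrank_degreeLT]; omega)
  obtain ⟨c, hc⟩ := Submodule.mem_span_singleton.mp ((Submodule.Quotient.mk_eq_zero _).mp hPQ)
  refine ⟨P, Q, by simpa using hP, by simpa using hQ, mem_degreeLT_succ_iff.mp P.2,
    mem_degreeLT_succ_iff.mp Q.2, c, ?_⟩
  rw [← smul_eq_C_mul]
  simpa using ((congrArg (degreeLT K (p + q + 1)).subtype hc).trans
    (LinearMap.codRestrict₂_apply _ _ _ _ P Q)).symm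

end Polynomial

open Polynomial

/-- Surjectivity of the map `W_α : (P,Q) ↦ z(P'Q - PQ') + αPQ`, viewed
projectively: for `α ∈ (0,1)` and any nonzero complex polynomial `R` of degree
at most `p + q` there are nonzero polynomials `P`, `Q` of degrees at most
`p`, `q` with `z(P'Q - PQ') + αPQ = c·R` for some nonzero constant `c`. -/
theorem W_alpha_surjective (p q : ℕ) (α : ℝ) (hα : α ∈ Set.Ioo (0 : ℝ) 1)
    (R : Polynomial ℂ) (hR : R ≠ 0) (hdeg : R.natDegree ≤ p + q) :
    ∃ (P Q : Polynomial ℂ) (c : ℂ), P ≠ 0 ∧ Q ≠ 0 ∧ c ≠ 0 ∧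
      P.natDegree ≤ p ∧ Q.natDegree ≤ q ∧
      X * (derivative P * Q - P * derivative Q) + C (α : ℂ) * (P * Q) = C c * R := by
  have hα_ne_int (n : ℤ) : (α : ℂ) ≠ n := fun h => by
    have h' : α = n := by exact_mod_cast h
    have : (0 : ℤ) < n ∧ n < 1 := ⟨by exact_mod_cast h' ▸ hα.1, by exact_mod_cast h' ▸ hα.2⟩
    omega
  obtain ⟨P, Q, hP, hQ, hPdeg, hQdeg, c, hPQ⟩ := exists_wAlpha_eq_C_mul (α : ℂ) p q hR hdeg
  refine ⟨P, Q, c, hP, hQ, ?_, hPdeg, hQdeg, hPQ⟩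
  rintro rfl
  exact wAlpha_ne_zero hα_ne_int hP hQ (by simpa using hPQ)
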